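/- Let ρ : ℝ^d → [0,∞) be an L² probability density. Then there exists K > 0 such that for all x and all r > 0, ∫ μ(B(y,r)) dμ(y) ≤ K · r^d, where dμ = ρ dLeb. In particular the lower correlation dimension of μ is at least d. -/

import Mathlib

/-!
Write `g` for the density. Then `∫ μ(B(x,r)) dμ(x) = ∬_{|x-y|<r} g(x) g(y) dx dy`, and
`2 g(x) g(y) ≤ g(x)² + g(y)²` together with the symmetry of `|x - y| < r` bounds this by
`‖g‖₂² · vol B(0,r) = K r^d`.

For the liminf we also need a polynomial lower bound, since otherwise `log C(r) / log r` could be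
unbounded above and its `liminf` a junk value. If `μ(B(0,R)) > 0`, averaging `z ↦ μ(B(z,s))` over
`B(0,R+s)` (Fubini) yields a point with `μ(B(z,s)) ≥ c s^d`, and
`∫ μ(B(x,2s)) dμ(x) ≥ μ(B(z,s))²`. So `c r^{2d} ≤ C(r) ≤ K r^d`, and `log C(r) / log r ≥ d + o(1)`.
-/

open MeasureTheory Filter Metric Topology

/-- Correlation integral: `∫ μ(B(x,r)) dμ(x)`. -/
noncomputable def corrIntegral {X : Type*} [PseudoMetricSpace X] [MeasurableSpace X]
    (μ : Measure X) (r : ℝ) : ℝ :=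
  ∫ x, (μ (ball x r)).toReal ∂μ

open Module
open scoped ENNReal

theorem ENNReal.two_mul_le_add_sq (a b : ℝ≥0∞) : 2 * a * b ≤ a ^ 2 + b ^ 2 := by
  induction a using ENNReal.recTopCoe with
  | top => simp
  | coe a =>
    induction b using ENNReal.recTopCoe with
    | top => simp
    | coe b => exact_mod_cast _root_.two_mul_le_add_sq a b

section PseudoMetric

variable {X : Type*} [PseudoMetricSpace X] [MeasurableSpace X]

theorem lintegral_measure_ball_ne_top (μ : Measure X) [IsFiniteMeasure μ] (r : ℝ) :
    ∫⁻ x, μ (ball x r) ∂μ ≠ ∞ :=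
  ne_top_of_le_ne_top (by simp [lintegral_const, ENNReal.mul_ne_top])
    (lintegral_mono fun _ => measure_mono (Set.subset_univ _))

variable [OpensMeasurableSpace X]

theorem measure_ball_sq_le_lintegral_measure_ball (μ : Measure X) (z : X) (r : ℝ) :
    μ (ball z r) ^ 2 ≤ ∫⁻ x, μ (ball x (2 * r)) ∂μ :=
  calc μ (ball z r) ^ 2 = ∫⁻ _ in ball z r, μ (ball z r) ∂μ := by
        rw [setLIntegral_const, sq]
    _ ≤ ∫⁻ x in ball z r, μ (ball x (2 * r)) ∂μ :=
        setLIntegral_mono' measurableSet_ball fun x hx =>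
          measure_mono (ball_subset_ball' (by linarith [mem_ball.1 hx, dist_comm z x]))
    _ ≤ ∫⁻ x, μ (ball x (2 * r)) ∂μ := setLIntegral_le_lintegral _ _

variable [SecondCountableTopology X]

theorem measurable_measure_ball (μ : Measure X) [SFinite μ] (r : ℝ) :
    Measurable fun x => μ (ball x r) :=
  measurable_measure_prodMk_left (s := {p : X × X | dist p.2 p.1 < r})
    (measurableSet_lt (by fun_prop) measurable_const)

theorem lintegral_setLIntegral_ball (μ ν : Measure X) [SFinite μ] [SFinite ν] {f : X → ℝ≥0∞}
    (hf : Measurable f) (r : ℝ) :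
    ∫⁻ x, ∫⁻ y in ball x r, f y ∂ν ∂μ = ∫⁻ y, f y * μ (ball y r) ∂ν := by
  have hmeas : Measurable (Function.uncurry fun x y => (ball x r).indicator f y) :=
    (hf.comp measurable_snd).indicator (measurableSet_lt (by fun_prop) measurable_const)
  simp_rw [← lintegral_indicator measurableSet_ball, lintegral_lintegral_swap hmeas.aemeasurable,
    ← lintegral_indicator_const measurableSet_ball]
  congr with y
  congr with x
  classical
  exact if_congr mem_ball_comm rfl rfl

theorem lintegral_mul_setLIntegral_ball_le (ν : Measure X) [SFinite ν] {g : X → ℝ≥0∞}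
    (hg : Measurable g) (r : ℝ) :
    ∫⁻ x, g x * ∫⁻ y in ball x r, g y ∂ν ∂ν ≤ ∫⁻ x, g x ^ 2 * ν (ball x r) ∂ν := by
  have hsq : Measurable fun x => g x ^ 2 := hg.pow_const 2
  refine (ENNReal.mul_le_mul_iff_right two_ne_zero ENNReal.ofNat_ne_top).1 ?_
  calc 2 * ∫⁻ x, g x * ∫⁻ y in ball x r, g y ∂ν ∂ν
      = ∫⁻ x, ∫⁻ y in ball x r, 2 * g x * g y ∂ν ∂ν := by
        rw [← lintegral_const_mul' _ _ ENNReal.ofNat_ne_top]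
        simp_rw [lintegral_const_mul _ hg, mul_assoc]
    _ ≤ ∫⁻ x, ∫⁻ y in ball x r, (g x ^ 2 + g y ^ 2) ∂ν ∂ν :=
        lintegral_mono fun x => lintegral_mono fun y => ENNReal.two_mul_le_add_sq _ _
    _ = ∫⁻ x, g x ^ 2 * ν (ball x r) ∂ν + ∫⁻ x, ∫⁻ y in ball x r, g y ^ 2 ∂ν ∂ν := by
        simp_rw [lintegral_add_left measurable_const, setLIntegral_const]
        exact lintegral_add_left (hsq.mul (measurable_measure_ball ν r)) _
    _ = 2 * ∫⁻ x, g x ^ 2 * ν (ball x r) ∂ν := by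
        rw [lintegral_setLIntegral_ball ν ν hsq, two_mul]

theorem lintegral_measure_ball_withDensity_le (ν : Measure X) [SFinite ν] {g : X → ℝ≥0∞}
    (hg : Measurable g) {r : ℝ} {V : ℝ≥0∞} (hV : ∀ x, ν (ball x r) ≤ V) :
    ∫⁻ x, ν.withDensity g (ball x r) ∂ν.withDensity g ≤ V * ∫⁻ x, g x ^ 2 ∂ν := by
  rw [lintegral_withDensity_eq_lintegral_mul _ hg (measurable_measure_ball _ r)]
  simp only [Pi.mul_apply, withDensity_apply _ measurableSet_ball]
  calc ∫⁻ x, g x * ∫⁻ y in ball x r, g y ∂ν ∂ν ≤ ∫⁻ x, g x ^ 2 * ν (ball x r) ∂ν :=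
        lintegral_mul_setLIntegral_ball_le ν hg r
    _ ≤ ∫⁻ x, g x ^ 2 * V ∂ν := lintegral_mono fun x => by gcongr; exact hV x
    _ = V * ∫⁻ x, g x ^ 2 ∂ν := by rw [lintegral_mul_const _ (hg.pow_const 2), mul_comm]

theorem corrIntegral_eq_toReal_lintegral (μ : Measure X) [IsFiniteMeasure μ] (r : ℝ) :
    corrIntegral μ r = (∫⁻ x, μ (ball x r) ∂μ).toReal :=
  integral_toReal (measurable_measure_ball μ r).aemeasurable
    (ae_of_all _ fun _ => measure_lt_top _ _)

end PseudoMetric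

section Haar

variable {E : Type*} [NormedAddCommGroup E] [NormedSpace ℝ E] [FiniteDimensional ℝ E]
  [MeasurableSpace E] [BorelSpace E]

theorem measure_ball_mul_le_iSup_measure_ball_mul (ν : Measure E) [ν.IsAddHaarMeasure]
    (μ : Measure E) [SFinite μ] (R s : ℝ) :
    ν (ball 0 s) * μ (ball 0 R) ≤ (⨆ z, μ (ball z s)) * ν (ball 0 (R + s)) := by
  set D := ball (0 : E) (R + s)
  have hD : Measurable (D.indicator (1 : E → ℝ≥0∞)) :=
    measurable_one.indicator (measurableSet_ball : MeasurableSet D)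
  calc ν (ball 0 s) * μ (ball 0 R)
      = ∫⁻ y in ball 0 R, ∫⁻ z in ball y s, D.indicator 1 z ∂ν ∂μ := by
        rw [← setLIntegral_const]
        refine setLIntegral_congr_fun measurableSet_ball fun y hy => ?_
        have hsub : ball y s ⊆ D := ball_subset_ball' (by linarith [mem_ball.1 hy])
        rw [lintegral_indicator_one measurableSet_ball, Measure.restrict_apply measurableSet_ball,
          Set.inter_eq_right.2 hsub, Measure.addHaar_ball_center ν y]
    _ ≤ ∫⁻ y, ∫⁻ z in ball y s, D.indicator 1 z ∂ν ∂μ := setLIntegral_le_lintegral _ _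
    _ = ∫⁻ z, D.indicator 1 z * μ (ball z s) ∂ν := lintegral_setLIntegral_ball μ ν hD s
    _ ≤ ∫⁻ z, D.indicator 1 z * ⨆ z', μ (ball z' s) ∂ν :=
        lintegral_mono fun z => by gcongr; exact le_iSup (fun z' => μ (ball z' s)) z
    _ = (⨆ z, μ (ball z s)) * ν D := by
        rw [lintegral_mul_const _ hD, lintegral_indicator_one measurableSet_ball, mul_comm]

theorem ofReal_pow_mul_measure_ball_le (μ : Measure E) [SFinite μ] {R s : ℝ} (hR : 0 ≤ R)
    (hs : 0 < s) :
    ENNReal.ofReal (s ^ finrank ℝ E) * μ (ball 0 R) ≤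
      ENNReal.ofReal ((R + s) ^ finrank ℝ E) * ⨆ z, μ (ball z s) := by
  set ν : Measure E := Measure.addHaar
  have h := measure_ball_mul_le_iSup_measure_ball_mul ν μ R s
  rw [Measure.addHaar_ball_of_pos ν 0 hs,
    Measure.addHaar_ball_of_pos ν 0 (r := R + s) (by positivity)] at h
  rw [← ENNReal.mul_le_mul_iff_right (measure_ball_pos ν 0 one_pos).ne' measure_ball_lt_top.ne]
  convert h using 1 <;> ring

theorem exists_pos_mul_pow_le_corrIntegral (μ : Measure E) [IsFiniteMeasure μ] (hμ : μ ≠ 0) :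
    ∃ c > (0 : ℝ), ∀ r, 0 < r → r ≤ 1 → c * r ^ (2 * finrank ℝ E) ≤ corrIntegral μ r := by
  obtain ⟨R, hR⟩ : ∃ R : ℕ, μ (ball 0 R) ≠ 0 := by
    by_contra! h
    refine hμ (Measure.measure_univ_eq_zero.1 ?_)
    rw [← iUnion_ball_nat 0]
    exact measure_iUnion_null h
  set d := finrank ℝ E
  set m := (μ (ball (0 : E) R)).toReal
  have hm : 0 < m := ENNReal.toReal_pos hR (measure_ne_top _ _)
  refine ⟨(m / (2 * (R + 1)) ^ d) ^ 2, by positivity, fun r hr hr1 => ?_⟩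
  set M := ⨆ z, μ (ball z (r / 2))
  have hMt : M ≠ ∞ :=
    ne_top_of_le_ne_top (measure_ne_top μ Set.univ)
      (iSup_le fun _ => measure_mono (Set.subset_univ _))
  have hM : (r / 2) ^ d * m ≤ (R + 1) ^ d * M.toReal := by
    have h := ENNReal.toReal_mono (ENNReal.mul_ne_top ENNReal.ofReal_ne_top hMt)
      (ofReal_pow_mul_measure_ball_le μ (Nat.cast_nonneg R) (half_pos hr))
    rw [ENNReal.toReal_mul, ENNReal.toReal_mul, ENNReal.toReal_ofReal (by positivity),
      ENNReal.toReal_ofReal (by positivity)] at h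
    exact h.trans (by gcongr; linarith)
  have hcorr : M.toReal ^ 2 ≤ corrIntegral μ r := by
    rw [corrIntegral_eq_toReal_lintegral, ← ENNReal.toReal_pow,
      ENNReal.iSup_pow_of_ne_zero two_ne_zero]
    refine ENNReal.toReal_mono (lintegral_measure_ball_ne_top μ r) (iSup_le fun z => ?_)
    simpa [mul_div_cancel₀] using measure_ball_sq_le_lintegral_measure_ball μ z (r / 2)
  have hM' : m * r ^ d ≤ M.toReal * (2 * (R + 1)) ^ d :=
    calc m * r ^ d = 2 ^ d * ((r / 2) ^ d * m) := by rw [div_pow]; field_simp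
      _ ≤ 2 ^ d * ((R + 1) ^ d * M.toReal) := by gcongr
      _ = M.toReal * (2 * (R + 1)) ^ d := by rw [mul_pow]; ring
  calc (m / (2 * (R + 1)) ^ d) ^ 2 * r ^ (2 * d) = (m * r ^ d / (2 * (R + 1)) ^ d) ^ 2 := by
        rw [pow_mul']
        ring
    _ ≤ M.toReal ^ 2 := by gcongr; rwa [div_le_iff₀ (by positivity)]
    _ ≤ corrIntegral μ r := hcorr

theorem exists_pos_corrIntegral_withDensity_le (ν : Measure E) [ν.IsAddHaarMeasure]
    {g : E → ℝ≥0∞} (hg : Measurable g) (hg2 : ∫⁻ x, g x ^ 2 ∂ν ≠ ∞)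
    [IsFiniteMeasure (ν.withDensity g)] :
    ∃ K > (0 : ℝ), ∀ r, 0 < r → corrIntegral (ν.withDensity g) r ≤ K * r ^ finrank ℝ E := by
  refine ⟨(ν (ball 0 1) * ∫⁻ x, g x ^ 2 ∂ν).toReal + 1, by positivity, fun r hr => ?_⟩
  have h := lintegral_measure_ball_withDensity_le ν hg fun x =>
    (Measure.addHaar_ball_of_pos ν x hr).le
  rw [corrIntegral_eq_toReal_lintegral]
  calc _ ≤ (ENNReal.ofReal (r ^ finrank ℝ E) * ν (ball 0 1) * ∫⁻ x, g x ^ 2 ∂ν).toReal :=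
        ENNReal.toReal_mono (by finiteness) h
    _ = (ν (ball 0 1) * ∫⁻ x, g x ^ 2 ∂ν).toReal * r ^ finrank ℝ E := by
        rw [ENNReal.toReal_mul, ENNReal.toReal_mul, ENNReal.toReal_mul,
          ENNReal.toReal_ofReal (by positivity)]
        ring
    _ ≤ _ := by gcongr; linarith

end Haar

theorem tendsto_log_mul_rpow_div_log {C : ℝ} (hC : 0 < C) (a : ℝ) :
    Tendsto (fun r => Real.log (C * r ^ a) / Real.log r) (𝓝[>] 0) (𝓝 a) := by
  have h := ((Real.tendsto_log_nhdsGT_zero.inv_tendsto_atBot).const_mul (Real.log C)).add_const a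
  rw [mul_zero, zero_add] at h
  refine h.congr' ?_
  filter_upwards [Ioo_mem_nhdsGT one_pos] with r ⟨hr0, hr1⟩
  have hlog : Real.log r ≠ 0 := (Real.log_neg hr0 hr1).ne
  rw [Real.log_mul hC.ne' (by positivity), Real.log_rpow hr0, Pi.inv_apply]
  field_simp

theorem le_liminf_log_div_log {f : ℝ → ℝ} {K c a b : ℝ} (hK : 0 < K) (hc : 0 < c)
    (hup : ∀ᶠ r in 𝓝[>] 0, f r ≤ K * r ^ a) (hlow : ∀ᶠ r in 𝓝[>] 0, c * r ^ b ≤ f r) :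
    a ≤ liminf (fun r => Real.log (f r) / Real.log r) (𝓝[>] 0) := by
  have hbounds : ∀ᶠ r in 𝓝[>] 0,
      Real.log (K * r ^ a) / Real.log r ≤ Real.log (f r) / Real.log r ∧
        Real.log (f r) / Real.log r ≤ Real.log (c * r ^ b) / Real.log r := by
    filter_upwards [hup, hlow, Ioo_mem_nhdsGT one_pos] with r hu hl ⟨hr0, hr1⟩
    have hlog : Real.log r ≤ 0 := (Real.log_neg hr0 hr1).le
    have hcr : 0 < c * r ^ b := by positivity
    exact ⟨div_le_div_of_nonpos_of_le hlog (Real.log_le_log (hcr.trans_le hl) hu),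
      div_le_div_of_nonpos_of_le hlog (Real.log_le_log hcr hl)⟩
  have hupper := tendsto_log_mul_rpow_div_log hc b
  have hlower := tendsto_log_mul_rpow_div_log hK a
  rw [← hlower.liminf_eq]
  exact liminf_le_liminf (hbounds.mono fun _ h => h.1) hlower.isBoundedUnder_ge
    (hupper.isBoundedUnder_le.mono_le (hbounds.mono fun _ h => h.2)).isCoboundedUnder_ge

theorem correlation_integral_L2_density_bound_general (d : ℕ)
    (ρ : EuclideanSpace ℝ (Fin d) → ℝ)
    (hρ2 : MemLp ρ 2 volume)
    (μ : Measure (EuclideanSpace ℝ (Fin d)))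
    (hμ : μ = volume.withDensity (fun x => ENNReal.ofReal (ρ x)))
    (hprob : IsProbabilityMeasure μ) :
    (∃ K > (0:ℝ), ∀ r : ℝ, 0 < r → corrIntegral μ r ≤ K * r ^ (d : ℝ)) ∧
      (d : ℝ) ≤ liminf (fun r : ℝ => Real.log (corrIntegral μ r) / Real.log r) (𝓝[>] 0) := by
  obtain ⟨ρ', hρ'm, hρρ'⟩ := hρ2.aestronglyMeasurable.aemeasurable
  have hsq : ∫⁻ x, ENNReal.ofReal (ρ' x) ^ 2 ≠ ∞ := by
    refine ne_top_of_le_ne_top hρ2.integrable_sq.hasFiniteIntegral.ne (lintegral_mono_ae ?_)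
    filter_upwards [hρρ'] with x hx
    rw [← hx, enorm_pow]
    gcongr
    exact Real.ofReal_le_enorm _
  rw [withDensity_congr_ae (hρρ'.mono fun x hx => by rw [hx])] at hμ
  subst hμ
  have hd : finrank ℝ (EuclideanSpace ℝ (Fin d)) = d := finrank_euclideanSpace_fin
  obtain ⟨K, hK, hup⟩ := exists_pos_corrIntegral_withDensity_le volume hρ'm.ennreal_ofReal hsq
  obtain ⟨c, hc, hlow⟩ := exists_pos_mul_pow_le_corrIntegral _ hprob.ne_zero
  simp only [hd, ← Real.rpow_natCast] at hup hlow
  refine ⟨⟨K, hK, hup⟩, le_liminf_log_div_log (b := (2 * d : ℕ)) hK hc ?_ ?_⟩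
  · filter_upwards [self_mem_nhdsWithin] with r hr using hup r hr
  · filter_upwards [Ioc_mem_nhdsGT one_pos] with r ⟨hr0, hr1⟩ using hlow r hr0 hr1

/-- If `ρ : ℝ^d → [0,∞)` is an `L²` probability density and `dμ = ρ dLeb`, then there is
`K > 0` with `∫ μ(B(y,r)) dμ(y) ≤ K·r^d` for all `r > 0`; in particular the lower
correlation dimension of `μ` is at least `d`. -/
theorem correlation_integral_L2_density_bound (d : ℕ)
    (ρ : EuclideanSpace ℝ (Fin d) → ℝ) (hρ0 : ∀ x, 0 ≤ ρ x)
    (hρ2 : MemLp ρ 2 volume)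
    (μ : Measure (EuclideanSpace ℝ (Fin d)))
    (hμ : μ = volume.withDensity (fun x => ENNReal.ofReal (ρ x)))
    (hprob : IsProbabilityMeasure μ) :
    (∃ K > (0:ℝ), ∀ r : ℝ, 0 < r → corrIntegral μ r ≤ K * r ^ (d : ℝ)) ∧
      (d : ℝ) ≤ liminf (fun r : ℝ => Real.log (corrIntegral μ r) / Real.log r) (𝓝[>] 0) :=
  correlation_integral_L2_density_bound_general d ρ hρ2 μ hμ hprob
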